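/- For the uniform recursive tree U_g with branching parameter f, the diagonal entry of the pseudoinverse L†(g) of its Laplacian corresponding to a node x with label {0, i_1, …, i_n} equals L†_{xx}(g) = n − 2·Σ_{k=1}^{n} (f+1)^{−i_k} + 1/(f+1) − (f+1)^{−(g+1)}. -/

import Mathlib

open Matrix BigOperators

/-- The vertices of the uniform recursive tree `U_g` with branching parameter `f`:
`U_0` is a single node (the central node), and at each iteration every existing
node receives `f` new leaf children. -/
def URTV (f : ℕ) : ℕ → Type
  | 0 => Unit
  | g + 1 => URTV f g ⊕ (URTV f g × Fin f)

instance urtFintype (f : ℕ) : ∀ g, Fintype (URTV f g)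
  | 0 => inferInstanceAs (Fintype Unit)
  | g + 1 =>
    letI := urtFintype f g
    inferInstanceAs (Fintype (URTV f g ⊕ (URTV f g × Fin f)))

instance urtDecEq (f : ℕ) : ∀ g, DecidableEq (URTV f g)
  | 0 => inferInstanceAs (DecidableEq Unit)
  | g + 1 =>
    letI := urtDecEq f g
    inferInstanceAs (DecidableEq (URTV f g ⊕ (URTV f g × Fin f)))

/-- The adjacency relation of `U_g`: each new leaf is joined to the node it was
attached to. -/
def urtRel (f : ℕ) : ∀ g, URTV f g → URTV f g → Prop
  | 0, _, _ => False
  | g + 1, Sum.inl x, Sum.inl y => urtRel f g x y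
  | _ + 1, Sum.inl x, Sum.inr (y, _) => x = y
  | _ + 1, Sum.inr (x, _), Sum.inl y => x = y
  | _ + 1, Sum.inr _, Sum.inr _ => False

/-- The uniform recursive tree `U_g` as a simple graph. -/
def urtGraph (f g : ℕ) : SimpleGraph (URTV f g) :=
  SimpleGraph.fromRel (urtRel f g)

/-- The central node of `U_g`. -/
def urtCenter (f : ℕ) : ∀ g, URTV f g
  | 0 => ()
  | g + 1 => Sum.inl (urtCenter f g)

/-- The label `{0, i_1, …, i_n}` of a node of `U_g`: the increasing list of levels
(creation iterations) of the nodes on the unique path from the central node to the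
node.  The central node has label `[0]`; a node created at iteration `g+1` appends
`g+1` to the label of the node it was attached to. -/
def urtLabel (f : ℕ) : ∀ g, URTV f g → List ℕ
  | 0, _ => [0]
  | g + 1, Sum.inl x => urtLabel f g x
  | g + 1, Sum.inr (x, _) => urtLabel f g x ++ [g + 1]

/-- The all-ones matrix `J`. -/
def JMat (V : Type*) : Matrix V V ℝ := Matrix.of fun _ _ => (1 : ℝ)

/-- The Laplacian matrix (over `ℝ`) of a simple graph (all edge weights `1`). -/
noncomputable def glap {V : Type*} [Fintype V] (G : SimpleGraph V) : Matrix V V ℝ := by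
  classical exact SimpleGraph.lapMatrix ℝ G

/-- The pseudoinverse `L† = (L + (1/N)·J)⁻¹ - (1/N)·J` of the graph Laplacian. -/
noncomputable def gdag {V : Type*} [Fintype V] [DecidableEq V] (G : SimpleGraph V) :
    Matrix V V ℝ :=
  (glap G + ((Fintype.card V : ℝ))⁻¹ • JMat V)⁻¹ - ((Fintype.card V : ℝ))⁻¹ • JMat V

/-!
Write `N = (f+1)^g` and `K = (L + J/N)⁻¹`, so that `L† = K - J/N`. Every node of `U_{g+1}` is
either an old node of `U_g` or a leaf hung from one, its anchor, and `K` obeys a simple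
recursion: `K_{g+1}(u, v)` is `K_g` at the anchors, shifted by a constant, by `-(f+1)^(-(g+1))`
for each of `u`, `v` that is new, and by `1` on the diagonal at new leaves. That this is the
inverse is checked column by column by induction: the columns sum to `1`, and `L K = 1 - J/N`
because the Laplacian of `U_{g+1}` acts at an old node as that of `U_g` plus the differences
along the new pendant edges, and at a leaf as the difference with its anchor. Reading the
recursion on the diagonal, a new leaf adds `1 - 2 (f+1)^(-(g+1))`, which produces the terms
`n - 2 ∑ₖ (f+1)^(-iₖ)` of the formula.
-/

namespace URTV

variable {f g : ℕ}

-- Stating lemmas through `old` and `leaf` rather than `Sum.inl` and `Sum.inr` keeps the terms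
-- typed as `URTV f (g + 1)`, which `rw` and `simp` need to match them.
def old : URTV f g → URTV f (g + 1) := Sum.inl

def leaf (x : URTV f g) (i : Fin f) : URTV f (g + 1) := Sum.inr (x, i)

def anchor : URTV f (g + 1) → URTV f g := Sum.elim id Prod.fst

def fresh : URTV f (g + 1) → ℝ := Sum.elim (fun _ => 0) (fun _ => 1)

@[simp] theorem anchor_old (x : URTV f g) : anchor (old x) = x := rfl
@[simp] theorem anchor_leaf (x : URTV f g) (i : Fin f) : anchor (leaf x i) = x := rfl
@[simp] theorem fresh_old (x : URTV f g) : fresh (old x) = 0 := rfl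
@[simp] theorem fresh_leaf (x : URTV f g) (i : Fin f) : fresh (leaf x i) = 1 := rfl

theorem old_injective : Function.Injective (old : URTV f g → URTV f (g + 1)) :=
  Sum.inl_injective

@[simp] theorem old_inj {x y : URTV f g} : old x = old y ↔ x = y := old_injective.eq_iff

@[simp] theorem leaf_inj {x y : URTV f g} {i j : Fin f} : leaf x i = leaf y j ↔ x = y ∧ i = j :=
  Sum.inr_injective.eq_iff.trans Prod.ext_iff

@[simp] theorem old_ne_leaf (x y : URTV f g) (i : Fin f) : old x ≠ leaf y i := Sum.inl_ne_inr

@[simp] theorem leaf_ne_old (x y : URTV f g) (i : Fin f) : leaf x i ≠ old y := Sum.inr_ne_inl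

@[elab_as_elim]
theorem succ_induction {motive : URTV f (g + 1) → Prop} (old : ∀ x, motive (old x))
    (leaf : ∀ x i, motive (leaf x i)) : ∀ u, motive u
  | Sum.inl x => old x
  | Sum.inr (x, i) => leaf x i

theorem card_eq (f : ℕ) : ∀ g, Fintype.card (URTV f g) = (f + 1) ^ g
  | 0 => rfl
  | g + 1 => by
    change Fintype.card (URTV f g ⊕ URTV f g × Fin f) = _
    rw [Fintype.card_sum, Fintype.card_prod, Fintype.card_fin, card_eq f g]
    ring

theorem sum_succ {M : Type*} [AddCommMonoid M] (h : URTV f (g + 1) → M) :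
    ∑ u, h u = ∑ x, h (old x) + ∑ x, ∑ i, h (leaf x i) := by
  rw [← Fintype.sum_prod_type']
  exact Fintype.sum_sum_type h

theorem sum_anchor (h : URTV f g → ℝ) : ∑ u, h (anchor u) = (f + 1) * ∑ x, h x := by
  simp [sum_succ, ← Finset.mul_sum]
  ring

theorem sum_fresh : ∑ u : URTV f (g + 1), fresh u = (f + 1) ^ g * f := by
  simp [sum_succ, card_eq]

theorem ite_eq_anchor (x : URTV f g) (y : URTV f (g + 1)) :
    (if x = anchor y then (1 : ℝ) else 0) =
      (if old x = y then 1 else 0) + ∑ i, if leaf x i = y then 1 else 0 := by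
  induction y using succ_induction with
  | old w => by_cases h : x = w <;> simp [h]
  | leaf w j => by_cases h : x = w <;> simp [h]

end URTV

open URTV

section Laplacian

variable {f g : ℕ}

theorem urtGraph_adj_old_old (x y : URTV f g) :
    (urtGraph f (g + 1)).Adj (old x) (old y) ↔ (urtGraph f g).Adj x y :=
  and_congr_left' old_injective.ne_iff

theorem urtGraph_adj_old_leaf (x y : URTV f g) (i : Fin f) :
    (urtGraph f (g + 1)).Adj (old x) (leaf y i) ↔ x = y := by
  show Sum.inl x ≠ Sum.inr (y, i) ∧ (x = y ∨ y = x) ↔ x = y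
  simp [eq_comm]

theorem urtGraph_adj_leaf_old (x y : URTV f g) (i : Fin f) :
    (urtGraph f (g + 1)).Adj (leaf x i) (old y) ↔ x = y := by
  rw [SimpleGraph.adj_comm, urtGraph_adj_old_leaf, eq_comm]

theorem urtGraph_not_adj_leaf_leaf (x y : URTV f g) (i j : Fin f) :
    ¬ (urtGraph f (g + 1)).Adj (leaf x i) (leaf y j) :=
  fun h => (h.2.elim id id : False)

open scoped Classical in
theorem glap_mulVec_apply {V : Type*} [Fintype V] (G : SimpleGraph V) (h : V → ℝ) (u : V) :
    (glap G *ᵥ h) u = ∑ w, if G.Adj u w then h u - h w else 0 := by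
  rw [glap, SimpleGraph.lapMatrix_mulVec_apply, ← Finset.sum_filter,
    ← SimpleGraph.neighborFinset_eq_filter, Finset.sum_sub_distrib, Finset.sum_const,
    SimpleGraph.card_neighborFinset_eq_degree, nsmul_eq_mul]

theorem glap_mulVec_add_const {V : Type*} [Fintype V] (G : SimpleGraph V) (h : V → ℝ)
    (c : ℝ) : glap G *ᵥ (fun z => h z + c) = glap G *ᵥ h := by
  classical
  ext u
  simp [glap_mulVec_apply]

theorem glap_succ_mulVec_old (k : URTV f (g + 1) → ℝ) (x : URTV f g) :
    (glap (urtGraph f (g + 1)) *ᵥ k) (old x) =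
      (glap (urtGraph f g) *ᵥ (k ∘ old)) x + ∑ i, (k (old x) - k (leaf x i)) := by
  classical
  simp [glap_mulVec_apply, sum_succ, urtGraph_adj_old_old, urtGraph_adj_old_leaf]

theorem glap_succ_mulVec_leaf (k : URTV f (g + 1) → ℝ) (x : URTV f g) (i : Fin f) :
    (glap (urtGraph f (g + 1)) *ᵥ k) (leaf x i) = k (leaf x i) - k (old x) := by
  classical
  simp [glap_mulVec_apply, sum_succ, urtGraph_adj_leaf_old, urtGraph_not_adj_leaf_leaf]

end Laplacian

theorem urtLabel_ne_nil (f : ℕ) : ∀ g (x : URTV f g), urtLabel f g x ≠ []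
  | 0, _ => List.cons_ne_nil _ _
  | g + 1, x => by
    induction x using succ_induction with
    | old x => exact urtLabel_ne_nil f g x
    | leaf x i => exact List.append_ne_nil_of_right_ne_nil _ (List.cons_ne_nil _ _)

theorem sum_map_zpow_neg_append (a : ℝ) (l : List ℕ) (n : ℕ) :
    ((l ++ [n]).map (fun i => a ^ (-(i : ℤ)))).sum =
      (l.map (fun i => a ^ (-(i : ℤ)))).sum + (a ^ n)⁻¹ := by
  simp

section Kernel

variable {f g : ℕ}

/-- The matrix `(L + J/N)⁻¹ = L† + J/N` of `U_g`. In closed form it is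
`K(x, y) = |x ∧ y| - σ(x) - σ(y) + c_g`, with `|x ∧ y|` the depth of the last common ancestor and
`σ(x) = ∑ₖ (f+1)^(-iₖ)`; the constant `-f²/(f+1)^(g+2)` of each step is the one that keeps the
column sums equal to `1`. -/
noncomputable def urtKernel (f : ℕ) : ∀ g, URTV f g → URTV f g → ℝ
  | 0, _, _ => 1
  | g + 1, u, v =>
      urtKernel f g (anchor u) (anchor v) - (f : ℝ) ^ 2 / ((f : ℝ) + 1) ^ (g + 2)
        - (fresh u + fresh v) / ((f : ℝ) + 1) ^ (g + 1) + if u = v then fresh u else 0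

theorem sum_urtKernel (f : ℕ) : ∀ g (y : URTV f g), ∑ z, urtKernel f g z y = 1
  | 0, _ => by simp [urtKernel, card_eq]
  | g + 1, y => by
    have hK : ∑ u, urtKernel f g (anchor u) (anchor y) = f + 1 := by
      rw [sum_anchor (urtKernel f g · (anchor y)), sum_urtKernel f g, mul_one]
    simp only [urtKernel, Finset.sum_add_distrib, Finset.sum_sub_distrib, ← Finset.sum_div, hK,
      sum_fresh, Finset.sum_ite_eq', Finset.mem_univ, if_true, Finset.sum_const,
      Finset.card_univ, card_eq, nsmul_eq_mul]
    push_cast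
    field_simp
    ring

theorem urtKernel_old (x : URTV f g) (y : URTV f (g + 1)) :
    urtKernel f (g + 1) (old x) y = urtKernel f g x (anchor y) +
      (-(f : ℝ) ^ 2 / ((f : ℝ) + 1) ^ (g + 2) - fresh y / ((f : ℝ) + 1) ^ (g + 1)) := by
  simp only [urtKernel, anchor_old, fresh_old, zero_add, ite_self, add_zero]
  ring

theorem urtKernel_leaf_sub_old (x : URTV f g) (i : Fin f) (y : URTV f (g + 1)) :
    urtKernel f (g + 1) (leaf x i) y - urtKernel f (g + 1) (old x) y =
      (if leaf x i = y then 1 else 0) - (((f : ℝ) + 1) ^ (g + 1))⁻¹ := by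
  simp only [urtKernel, anchor_leaf, anchor_old, fresh_leaf, fresh_old, ite_self]
  split_ifs <;> ring

theorem glap_mulVec_urtKernel (f : ℕ) : ∀ g (x y : URTV f g),
    (glap (urtGraph f g) *ᵥ (urtKernel f g · y)) x =
      (if x = y then 1 else 0) - (((f : ℝ) + 1) ^ g)⁻¹
  | 0, x, y => by
    classical
    obtain rfl : x = y := rfl
    simp [glap_mulVec_apply, urtGraph, urtRel]
  | g + 1, x, y => by
    induction x using succ_induction with
    | old x =>
      have hcol : (urtKernel f (g + 1) · y) ∘ old = fun z => urtKernel f g z (anchor y) +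
          (-(f : ℝ) ^ 2 / ((f : ℝ) + 1) ^ (g + 2) - fresh y / ((f : ℝ) + 1) ^ (g + 1)) :=
        funext fun z => urtKernel_old z y
      have hleaves : ∑ i, (urtKernel f (g + 1) (old x) y - urtKernel f (g + 1) (leaf x i) y) =
          f * (((f : ℝ) + 1) ^ (g + 1))⁻¹ - ∑ i, if leaf x i = y then 1 else 0 := by
        have hedge : ∀ i, urtKernel f (g + 1) (old x) y - urtKernel f (g + 1) (leaf x i) y =
            (((f : ℝ) + 1) ^ (g + 1))⁻¹ - if leaf x i = y then 1 else 0 := fun i => by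
          rw [← neg_sub, urtKernel_leaf_sub_old, neg_sub]
        simp only [hedge, Finset.sum_sub_distrib, Finset.sum_const, Finset.card_univ,
          Fintype.card_fin, nsmul_eq_mul]
      rw [glap_succ_mulVec_old, hcol, glap_mulVec_add_const, glap_mulVec_urtKernel f g, hleaves,
        ite_eq_anchor]
      field_simp
      ring
    | leaf x i => rw [glap_succ_mulVec_leaf, urtKernel_leaf_sub_old]

theorem glap_add_mul_urtKernel (f g : ℕ) :
    (glap (urtGraph f g) + ((Fintype.card (URTV f g) : ℝ))⁻¹ • JMat (URTV f g)) *
      Matrix.of (urtKernel f g) = 1 := by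
  ext x y
  have hlap : (glap (urtGraph f g) * Matrix.of (urtKernel f g)) x y =
      (glap (urtGraph f g) *ᵥ (urtKernel f g · y)) x := rfl
  have hJ : (JMat (URTV f g) * Matrix.of (urtKernel f g)) x y = ∑ z, urtKernel f g z y := by
    simp [JMat, Matrix.mul_apply]
  rw [Matrix.add_mul, Matrix.add_apply, Matrix.smul_mul, Matrix.smul_apply, hlap, hJ,
    glap_mulVec_urtKernel, sum_urtKernel, card_eq, Matrix.one_apply]
  push_cast
  ring

theorem urtKernel_self (f : ℕ) : ∀ g (x : URTV f g),
    urtKernel f g x x = ((urtLabel f g x).tail.length : ℝ) -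
      2 * ((urtLabel f g x).tail.map (fun i => ((f : ℝ) + 1) ^ (-(i : ℤ)))).sum +
      1 / ((f : ℝ) + 1) - (((f : ℝ) + 1) ^ (g + 1))⁻¹ + (((f : ℝ) + 1) ^ g)⁻¹
  | 0, x => by simp [urtKernel, urtLabel]
  | g + 1, x => by
    induction x using succ_induction with
    | old x =>
      have hlabel : urtLabel f (g + 1) (old x) = urtLabel f g x := rfl
      simp only [urtKernel, anchor_old, fresh_old, if_true, urtKernel_self f g x, hlabel]
      field_simp
      ring
    | leaf x i =>
      have hlabel : (urtLabel f (g + 1) (leaf x i)).tail = (urtLabel f g x).tail ++ [g + 1] :=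
        List.tail_append_of_ne_nil (urtLabel_ne_nil f g x)
      rw [hlabel, List.length_append, List.length_singleton, sum_map_zpow_neg_append]
      simp only [urtKernel, anchor_leaf, fresh_leaf, if_true, urtKernel_self f g x]
      push_cast
      field_simp
      ring

end Kernel

theorem stmt_18_general (f : ℕ) (g : ℕ) (x : URTV f g) :
    gdag (urtGraph f g) x x =
      ((urtLabel f g x).tail.length : ℝ) -
        2 * ((urtLabel f g x).tail.map (fun i => ((f : ℝ) + 1) ^ (-(i : ℤ)))).sum +
        1 / ((f : ℝ) + 1) - ((f : ℝ) + 1) ^ (-((g : ℤ) + 1)) := by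
  have hpow : ((f : ℝ) + 1) ^ (-((g : ℤ) + 1)) = (((f : ℝ) + 1) ^ (g + 1))⁻¹ := by
    rw [← zpow_natCast, ← _root_.zpow_neg]
    push_cast
    rfl
  rw [gdag, Matrix.inv_eq_right_inv (glap_add_mul_urtKernel f g), Matrix.sub_apply,
    Matrix.smul_apply, Matrix.of_apply, urtKernel_self, card_eq, hpow]
  simp [JMat]

/-- For the uniform recursive tree `U_g` with branching parameter `f`, the diagonal
entry of the pseudoinverse `L†(g)` of its Laplacian corresponding to a node `x`
with label `{0, i_1, …, i_n}` equals
`L†_{xx}(g) = n - 2·Σ_{k=1}^{n} (f+1)^{-i_k} + 1/(f+1) - (f+1)^{-(g+1)}`. -/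
theorem stmt_18 (f : ℕ) (hf : 1 ≤ f) (g : ℕ) (x : URTV f g) :
    gdag (urtGraph f g) x x =
      ((urtLabel f g x).tail.length : ℝ) -
        2 * ((urtLabel f g x).tail.map (fun i => ((f : ℝ) + 1) ^ (-(i : ℤ)))).sum +
        1 / ((f : ℝ) + 1) - ((f : ℝ) + 1) ^ (-((g : ℤ) + 1)) :=
  stmt_18_general f g x
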